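/- The image of Γ(p^l, p^{l+k}) under the determinant map is exactly U_l = 1 + p^l·ℤ_p: for every u ∈ ℤ_p^×, there exists X ∈ Γ(p^l, p^{l+k}) with det X = u if and only if u ≡ 1 (mod p^l). -/
import Mathlib


open Matrix

/-- Membership in `Γ(p^l, p^{l+k}) ⊆ GL₂(ℤ_p)`: `X − 1 ∈ diag(p^l, p^{l+k})·M₂(ℤ_p)`. -/
def InGammaFull (p : ℕ) [Fact p.Prime] (l k : ℕ) (X : GL (Fin 2) ℤ_[p]) : Prop :=
  (p : ℤ_[p]) ^ l ∣ ((X : Matrix (Fin 2) (Fin 2) ℤ_[p]) - 1) 0 0 ∧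
  (p : ℤ_[p]) ^ l ∣ ((X : Matrix (Fin 2) (Fin 2) ℤ_[p]) - 1) 0 1 ∧
  (p : ℤ_[p]) ^ (l + k) ∣ ((X : Matrix (Fin 2) (Fin 2) ℤ_[p]) - 1) 1 0 ∧
  (p : ℤ_[p]) ^ (l + k) ∣ ((X : Matrix (Fin 2) (Fin 2) ℤ_[p]) - 1) 1 1

/-- The image of `Γ(p^l, p^{l+k})` under the determinant map is
exactly `U_l = 1 + p^l·ℤ_p`: for every unit `u ∈ ℤ_p^×` there exists
`X ∈ Γ(p^l, p^{l+k})` with `det X = u` if and only if `u ≡ 1 (mod p^l)`. -/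
theorem stmt_5 (p : ℕ) [Fact p.Prime] (l k : ℕ) (u : ℤ_[p]ˣ) :
    (∃ X : GL (Fin 2) ℤ_[p], InGammaFull p l k X ∧
        Matrix.det (X : Matrix (Fin 2) (Fin 2) ℤ_[p]) = (u : ℤ_[p])) ↔
    (p : ℤ_[p]) ^ l ∣ ((u : ℤ_[p]) - 1) := by
  constructor
  · rintro ⟨X, ⟨h00, h01, h10, h11⟩, hdet⟩
    set M := ((X : GL (Fin 2) ℤ_[p]) : Matrix (Fin 2) (Fin 2) ℤ_[p]) with hM
    have hd : (u : ℤ_[p]) - 1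
        = (M - 1) 0 0 + (M - 1) 1 1 + (M - 1) 0 0 * (M - 1) 1 1
          - (M - 1) 0 1 * (M - 1) 1 0 := by
      rw [← hdet, Matrix.det_fin_two]
      simp [Matrix.sub_apply, Matrix.one_apply]
      ring
    rw [hd]
    have h11' : (p : ℤ_[p]) ^ l ∣ (M - 1) 1 1 :=
      dvd_trans (pow_dvd_pow _ (Nat.le_add_right l k)) h11
    have h10' : (p : ℤ_[p]) ^ l ∣ (M - 1) 1 0 :=
      dvd_trans (pow_dvd_pow _ (Nat.le_add_right l k)) h10
    exact dvd_sub (dvd_add (dvd_add h00 h11') (h00.mul_right _)) (h01.mul_right _)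
  · intro hu
    refine ⟨⟨!![(u : ℤ_[p]), 0; 0, 1], !![((u⁻¹ : ℤ_[p]ˣ) : ℤ_[p]), 0; 0, 1], ?_, ?_⟩, ?_, ?_⟩
    · ext i j
      fin_cases i <;> fin_cases j <;>
        simp [Matrix.mul_apply, Fin.sum_univ_two, Matrix.one_apply]
    · ext i j
      fin_cases i <;> fin_cases j <;>
        simp [Matrix.mul_apply, Fin.sum_univ_two, Matrix.one_apply]
    · refine ⟨?_, ?_, ?_, ?_⟩ <;>
        simp [Matrix.sub_apply, Matrix.one_apply] <;> exact hu
    · simp [Matrix.det_fin_two]
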